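/- Fix k > 0 and ρ ∈ (0,1). For (c₁, c₂) ∈ (0,∞) × (0,∞), let (t*(c₁,c₂), p*(c₁,c₂)) denote the unique pair satisfying g_{k,ρ}(ρ·t* − p*) = c₁ and ℋ_{c₁,c₂}(p*, t*) = 0. Then the map (c₁, c₂) ↦ (t*(c₁,c₂), p*(c₁,c₂)) is continuous on (0,∞) × (0,∞). -/

import Mathlib

/-!
Put `x = ρ t - p`. The first equilibrium condition reads `g(x) = c₁`, and `g` is strictly
increasing: exponential tilting of `φ` gives `g'(x) = k e^{k x + k²(1-ρ²)/2} Φ(…) > 0`. Given `x`,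
the second condition reads `S(x, t) = c₂` with `S(x, t) = ∫ max(g(x + ρ(s - t)) - g(x), 0) φ(s) ds`,
which is strictly decreasing in `t` and, by dominated convergence with
`g(y) ≤ e^{k y + k²(1-ρ²)/2}`, continuous in `x`. The root of a strictly monotone equation
`F y w = v` depends continuously on `(y, v)` as soon as `F · w` is continuous; applied twice this
gives continuity of `x` in `c₁` and of `t` in `(x, c₂)`, and `p = ρ t - x`.
-/

open MeasureTheory Real Set

/-- Standard normal density. -/
noncomputable def stdPhi (x : ℝ) : ℝ := (Real.sqrt (2 * Real.pi))⁻¹ * Real.exp (-x ^ 2 / 2)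

/-- Standard normal CDF. -/
noncomputable def stdPhiCDF (x : ℝ) : ℝ := ∫ u in Set.Iic x, stdPhi u

/-- Normalized expected-profit function `g_{k,ρ}`. -/
noncomputable def gkr (k ρ x : ℝ) : ℝ :=
  Real.exp (k * x + k ^ 2 * (1 - ρ ^ 2) / 2) *
      stdPhiCDF ((x + k * (1 - ρ ^ 2)) / Real.sqrt (1 - ρ ^ 2)) -
    stdPhiCDF (x / Real.sqrt (1 - ρ ^ 2))

/-- Free-entry residual `ℋ_{c₁,c₂}(p, t)`. -/
noncomputable def FEres (k ρ c₁ c₂ p t : ℝ) : ℝ :=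
  (∫ s in Set.Ici t, gkr k ρ (ρ * s - p) * stdPhi s) - c₁ * stdPhiCDF (-t) - c₂

open Filter Topology ProbabilityTheory

lemma tendsto_of_strictMono_of_eventually_eq {α Y β γ : Type*} [TopologicalSpace Y]
    [LinearOrder β] [TopologicalSpace β] [OrderTopology β]
    [LinearOrder γ] [TopologicalSpace γ] [OrderClosedTopology γ]
    {l : Filter α} {F : Y → β → γ} (hF : ∀ y, StrictMono (F y)) {y₀ : Y}
    (hcont : ∀ b, ContinuousAt (fun y => F y b) y₀) {u : α → Y} {v : α → γ} {w : α → β}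
    {w₀ : β} (hu : Tendsto u l (𝓝 y₀)) (hv : Tendsto v l (𝓝 (F y₀ w₀)))
    (hw : ∀ᶠ a in l, F (u a) (w a) = v a) : Tendsto w l (𝓝 w₀) := by
  refine tendsto_order.2 ⟨fun b hb => ?_, fun b hb => ?_⟩
  · filter_upwards [((hcont b).tendsto.comp hu).eventually_lt hv (hF y₀ hb), hw] with a ha hwa
    exact (hF (u a)).lt_iff_lt.1 (hwa ▸ ha)
  · filter_upwards [hv.eventually_lt ((hcont b).tendsto.comp hu) (hF y₀ hb), hw] with a ha hwa
    exact (hF (u a)).lt_iff_lt.1 (hwa ▸ ha)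

lemma stdPhi_eq_gaussianPDFReal : stdPhi = gaussianPDFReal 0 1 := by
  ext x
  simp [stdPhi, gaussianPDFReal]

lemma stdPhi_pos (x : ℝ) : 0 < stdPhi x :=
  stdPhi_eq_gaussianPDFReal ▸ gaussianPDFReal_pos 0 1 x one_ne_zero

@[fun_prop]
lemma continuous_stdPhi : Continuous stdPhi := by
  unfold stdPhi
  fun_prop

lemma integrable_stdPhi : Integrable stdPhi :=
  stdPhi_eq_gaussianPDFReal ▸ integrable_gaussianPDFReal 0 1

lemma integral_stdPhi : ∫ x, stdPhi x = 1 :=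
  stdPhi_eq_gaussianPDFReal ▸ integral_gaussianPDFReal_eq_one 0 one_ne_zero

-- Completing the square: `e^{as} φ(s) = e^{a²/2} φ(s - a)`.
lemma integrable_exp_mul_mul_stdPhi (a : ℝ) :
    Integrable fun s => exp (a * s) * stdPhi s := by
  refine ((integrable_stdPhi.comp_sub_right a).const_mul (exp (a ^ 2 / 2))).congr
    (Eventually.of_forall fun s => ?_)
  simp only [stdPhi]
  rw [mul_left_comm, ← exp_add, mul_left_comm (exp (a * s)), ← exp_add]
  congr 2
  ring

lemma integrable_const_mul_exp_add_one_mul_stdPhi (a C : ℝ) :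
    Integrable fun s => (C * exp (a * s) + 1) * stdPhi s := by
  refine (((integrable_exp_mul_mul_stdPhi a).const_mul C).add integrable_stdPhi).congr
    (Eventually.of_forall fun s => ?_)
  simp only [Pi.add_apply]
  ring

lemma integrable_mul_stdPhi_of_abs_le {f : ℝ → ℝ} (hf : Continuous f) {a C : ℝ}
    (hle : ∀ s, |f s| ≤ C * exp (a * s) + 1) : Integrable fun s => f s * stdPhi s := by
  refine (integrable_const_mul_exp_add_one_mul_stdPhi a C).mono' (by fun_prop)
    (Eventually.of_forall fun s => ?_)
  rw [norm_mul, norm_of_nonneg (stdPhi_pos s).le]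
  exact mul_le_mul_of_nonneg_right (hle s) (stdPhi_pos s).le

lemma stdPhiCDF_nonneg (x : ℝ) : 0 ≤ stdPhiCDF x :=
  setIntegral_nonneg measurableSet_Iic fun u _ => (stdPhi_pos u).le

lemma stdPhiCDF_le_one (x : ℝ) : stdPhiCDF x ≤ 1 :=
  integral_stdPhi ▸
    setIntegral_le_integral integrable_stdPhi (Eventually.of_forall fun u => (stdPhi_pos u).le)

lemma stdPhiCDF_pos (x : ℝ) : 0 < stdPhiCDF x := by
  rw [stdPhiCDF, setIntegral_pos_iff_support_of_nonneg_ae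
    (ae_of_all _ fun u => (stdPhi_pos u).le) integrable_stdPhi.integrableOn]
  simp [Function.support, (stdPhi_pos _).ne']

lemma hasDerivAt_stdPhiCDF (x : ℝ) : HasDerivAt stdPhiCDF (stdPhi x) x := by
  have hsplit : ∀ y, stdPhiCDF 0 + ∫ u in (0 : ℝ)..y, stdPhi u = stdPhiCDF y := fun y => by
    rw [← intervalIntegral.integral_Iic_sub_Iic integrable_stdPhi.integrableOn
      integrable_stdPhi.integrableOn, stdPhiCDF, stdPhiCDF]
    ring
  refine ((intervalIntegral.integral_hasDerivAt_right (a := 0)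
    integrable_stdPhi.intervalIntegrable (continuous_stdPhi.stronglyMeasurableAtFilter _ _)
    continuous_stdPhi.continuousAt).const_add (stdPhiCDF 0)).congr_of_eventuallyEq
    (Eventually.of_forall fun y => (hsplit y).symm)

@[fun_prop]
lemma continuous_stdPhiCDF : Continuous stdPhiCDF :=
  continuous_iff_continuousAt.2 fun x => (hasDerivAt_stdPhiCDF x).continuousAt

lemma stdPhiCDF_neg (t : ℝ) : stdPhiCDF (-t) = ∫ s in Ici t, stdPhi s := by
  rw [integral_Ici_eq_integral_Ioi, stdPhiCDF, ← neg_neg t, ← integral_comp_neg_Iic, neg_neg]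
  simp [stdPhi]

lemma exp_mul_stdPhi_add {k σ : ℝ} (hσ : σ ≠ 0) (x : ℝ) :
    exp (k * x + k ^ 2 * σ ^ 2 / 2) * stdPhi ((x + k * σ ^ 2) / σ) = stdPhi (x / σ) := by
  simp only [stdPhi]
  rw [mul_left_comm, ← exp_add]
  congr 2
  field_simp
  ring

section gkr

variable {k ρ : ℝ}

lemma hasDerivAt_gkr (hρ : ρ ^ 2 < 1) (x : ℝ) :
    HasDerivAt (gkr k ρ) (k * (exp (k * x + k ^ 2 * (1 - ρ ^ 2) / 2) *
      stdPhiCDF ((x + k * (1 - ρ ^ 2)) / √(1 - ρ ^ 2)))) x := by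
  set σ := √(1 - ρ ^ 2)
  have hσ : σ ≠ 0 := (sqrt_pos.2 (by linarith)).ne'
  have htilt := exp_mul_stdPhi_add (k := k) hσ x
  rw [sq_sqrt (by linarith)] at htilt
  have hE := (((hasDerivAt_id x).const_mul k).add_const (k ^ 2 * (1 - ρ ^ 2) / 2)).exp
  have hΦ₁ := (hasDerivAt_stdPhiCDF _).comp x
    (((hasDerivAt_id x).add_const (k * (1 - ρ ^ 2))).div_const σ)
  have hΦ₂ := (hasDerivAt_stdPhiCDF _).comp x ((hasDerivAt_id x).div_const σ)
  refine ((hE.mul hΦ₁).sub hΦ₂).congr_deriv ?_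
  simp only [id, Function.comp_apply]
  linear_combination htilt / σ

lemma gkr_strictMono (hk : 0 < k) (hρ : ρ ^ 2 < 1) : StrictMono (gkr k ρ) :=
  strictMono_of_deriv_pos fun x => (hasDerivAt_gkr hρ x).deriv ▸
    mul_pos hk (mul_pos (exp_pos _) (stdPhiCDF_pos _))

@[fun_prop]
lemma continuous_gkr : Continuous (gkr k ρ) := by
  unfold gkr
  fun_prop

lemma neg_one_le_gkr (x : ℝ) : -1 ≤ gkr k ρ x := by
  have := mul_nonneg (exp_pos (k * x + k ^ 2 * (1 - ρ ^ 2) / 2)).le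
    (stdPhiCDF_nonneg ((x + k * (1 - ρ ^ 2)) / √(1 - ρ ^ 2)))
  have := stdPhiCDF_le_one (x / √(1 - ρ ^ 2))
  rw [gkr]
  linarith

lemma gkr_le_exp (x : ℝ) : gkr k ρ x ≤ exp (k * x + k ^ 2 * (1 - ρ ^ 2) / 2) := by
  have := mul_le_of_le_one_right (exp_pos (k * x + k ^ 2 * (1 - ρ ^ 2) / 2)).le
    (stdPhiCDF_le_one ((x + k * (1 - ρ ^ 2)) / √(1 - ρ ^ 2)))
  have := stdPhiCDF_nonneg (x / √(1 - ρ ^ 2))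
  rw [gkr]
  linarith

lemma integrable_gkr_affine_mul_stdPhi (p : ℝ) :
    Integrable fun s => gkr k ρ (ρ * s - p) * stdPhi s := by
  refine integrable_mul_stdPhi_of_abs_le (by fun_prop)
    (a := k * ρ) (C := exp (k * -p + k ^ 2 * (1 - ρ ^ 2) / 2)) fun s => abs_le.2 ⟨?_, ?_⟩
  · linarith [neg_one_le_gkr (k := k) (ρ := ρ) (ρ * s - p),
      mul_nonneg (exp_pos (k * -p + k ^ 2 * (1 - ρ ^ 2) / 2)).le (exp_pos (k * ρ * s)).le]
  · calc gkr k ρ (ρ * s - p) ≤ exp (k * (ρ * s - p) + k ^ 2 * (1 - ρ ^ 2) / 2) := gkr_le_exp _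
      _ = exp (k * -p + k ^ 2 * (1 - ρ ^ 2) / 2) * exp (k * ρ * s) := by
        rw [← exp_add]; ring_nf
      _ ≤ _ := le_add_of_nonneg_right zero_le_one

end gkr

section surplus

variable {k ρ : ℝ}

/-- With `x = ρ t - p`, `gkr k ρ (x + ρ * (s - t)) = gkr k ρ (ρ * s - p)`. As `gkr` is increasing
and `ρ > 0`, the `max` vanishes exactly below the threshold `s < t`: this turns `ℋ`'s integral
over `[t, ∞)` into an integral over `ℝ` with continuous integrand. -/
noncomputable def entryGain (k ρ x t s : ℝ) : ℝ :=
  max (gkr k ρ (x + ρ * (s - t)) - gkr k ρ x) 0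

noncomputable def entrySurplus (k ρ x t : ℝ) : ℝ :=
  ∫ s, entryGain k ρ x t s * stdPhi s

lemma entryGain_nonneg (x t s : ℝ) : 0 ≤ entryGain k ρ x t s :=
  le_max_right _ _

lemma entryGain_le (hk : 0 ≤ k) {x X : ℝ} (hx : x ≤ X) (t s : ℝ) :
    entryGain k ρ x t s ≤
      exp (k * (X - ρ * t) + k ^ 2 * (1 - ρ ^ 2) / 2) * exp (k * ρ * s) + 1 := by
  refine max_le ?_ (by positivity)
  have hexp : exp (k * (x + ρ * (s - t)) + k ^ 2 * (1 - ρ ^ 2) / 2) ≤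
      exp (k * (X - ρ * t) + k ^ 2 * (1 - ρ ^ 2) / 2) * exp (k * ρ * s) := by
    rw [← exp_add]
    exact exp_le_exp.2 (by nlinarith)
  linarith [gkr_le_exp (k := k) (ρ := ρ) (x + ρ * (s - t)), neg_one_le_gkr (k := k) (ρ := ρ) x]

lemma integrable_entryGain_mul_stdPhi (hk : 0 ≤ k) (x t : ℝ) :
    Integrable fun s => entryGain k ρ x t s * stdPhi s :=
  integrable_mul_stdPhi_of_abs_le (by unfold entryGain; fun_prop) fun s =>
    (abs_of_nonneg (entryGain_nonneg x t s)).trans_le (entryGain_le hk le_rfl t s)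

lemma continuous_entrySurplus (hk : 0 ≤ k) (t : ℝ) :
    Continuous fun x => entrySurplus k ρ x t := by
  refine continuous_iff_continuousAt.2 fun x₀ => continuousAt_of_dominated
    (bound := fun s => (exp (k * (x₀ + 1 - ρ * t) + k ^ 2 * (1 - ρ ^ 2) / 2) *
      exp (k * ρ * s) + 1) * stdPhi s) ?_ ?_ (integrable_const_mul_exp_add_one_mul_stdPhi _ _) ?_
  · exact Eventually.of_forall fun x =>
      (integrable_entryGain_mul_stdPhi hk x t).aestronglyMeasurable
  · filter_upwards [Iio_mem_nhds (lt_add_one x₀)] with x hx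
    refine ae_of_all _ fun s => ?_
    rw [norm_mul, norm_of_nonneg (entryGain_nonneg x t s), norm_of_nonneg (stdPhi_pos s).le]
    exact mul_le_mul_of_nonneg_right (entryGain_le hk (le_of_lt hx) t s) (stdPhi_pos s).le
  · exact ae_of_all _ fun s => by unfold entryGain; fun_prop

lemma entrySurplus_strictAnti (hk : 0 < k) (hρ : ρ ∈ Ioo 0 1) (x : ℝ) :
    StrictAnti (entrySurplus k ρ x) := by
  have hg := gkr_strictMono hk (pow_lt_one₀ hρ.1.le hρ.2 two_ne_zero)
  intro t t' htt'
  have hint := integrable_entryGain_mul_stdPhi (ρ := ρ) hk.le x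
  have hpos : 0 < ∫ s, (entryGain k ρ x t s - entryGain k ρ x t' s) * stdPhi s := by
    refine integral_pos_of_integrable_nonneg_nonzero (x := t') (by unfold entryGain; fun_prop)
      ?_ (fun s => ?_) ?_
    · simp only [sub_mul]
      exact (hint t).sub (hint t')
    · refine mul_nonneg (sub_nonneg.2 (max_le_max_right _ (sub_le_sub_right ?_ _)))
        (stdPhi_pos s).le
      exact hg.monotone (by nlinarith [hρ.1])
    · have hgain : gkr k ρ x < gkr k ρ (x + ρ * (t' - t)) :=
        hg (lt_add_of_pos_right x (mul_pos hρ.1 (sub_pos.2 htt')))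
      simp only [entryGain, sub_self, mul_zero, add_zero, max_self, sub_zero]
      exact (mul_pos (lt_max_of_lt_left (sub_pos.2 hgain)) (stdPhi_pos t')).ne'
  simp only [sub_mul] at hpos
  rw [integral_sub (hint t) (hint t')] at hpos
  exact sub_pos.1 hpos

lemma FEres_gkr_eq_entrySurplus_sub (hk : 0 < k) (hρ : ρ ∈ Ioo 0 1) (c₂ p t : ℝ) :
    FEres k ρ (gkr k ρ (ρ * t - p)) c₂ p t = entrySurplus k ρ (ρ * t - p) t - c₂ := by
  have hg := (gkr_strictMono hk (pow_lt_one₀ hρ.1.le hρ.2 two_ne_zero)).monotone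
  have hshift : ∀ s, ρ * t - p + ρ * (s - t) = ρ * s - p := fun s => by ring
  have hbelow : ∀ s ∉ Ici t, entryGain k ρ (ρ * t - p) t s * stdPhi s = 0 := fun s hs => by
    rw [entryGain, hshift,
      max_eq_right (sub_nonpos.2 (hg (by nlinarith [hρ.1, notMem_Ici.1 hs]))), zero_mul]
  have hgain : (∫ s in Ici t, gkr k ρ (ρ * s - p) * stdPhi s) -
      gkr k ρ (ρ * t - p) * ∫ s in Ici t, stdPhi s = entrySurplus k ρ (ρ * t - p) t := by
    rw [← integral_const_mul, ← integral_sub (integrable_gkr_affine_mul_stdPhi p).integrableOn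
      (integrable_stdPhi.const_mul _).integrableOn, entrySurplus,
      ← setIntegral_eq_integral_of_forall_compl_eq_zero hbelow]
    refine setIntegral_congr_fun measurableSet_Ici fun s hs => ?_
    rw [entryGain, hshift, max_eq_left (sub_nonneg.2 (hg (by nlinarith [hρ.1, mem_Ici.1 hs])))]
    ring
  rw [FEres, stdPhiCDF_neg, ← hgain]

end surplus

theorem equilibrium_continuous_in_costs
    (k ρ : ℝ) (hk : 0 < k) (hρ : ρ ∈ Set.Ioo (0 : ℝ) 1)
    (sol : ℝ × ℝ → ℝ × ℝ)
    (hsol : ∀ c : ℝ × ℝ, c ∈ Set.Ioi (0 : ℝ) ×ˢ Set.Ioi (0 : ℝ) →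
      (gkr k ρ (ρ * (sol c).1 - (sol c).2) = c.1 ∧
        FEres k ρ c.1 c.2 (sol c).2 (sol c).1 = 0) ∧
      (∀ t p : ℝ, gkr k ρ (ρ * t - p) = c.1 → FEres k ρ c.1 c.2 p t = 0 →
        (t, p) = sol c)) :
    ContinuousOn sol (Set.Ioi (0 : ℝ) ×ˢ Set.Ioi (0 : ℝ)) := by
  set S : Set (ℝ × ℝ) := Ioi 0 ×ˢ Ioi 0
  intro c hc
  have hmargin : ∀ c' ∈ S, gkr k ρ (ρ * (sol c').1 - (sol c').2) = c'.1 :=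
    fun c' hc' => (hsol c' hc').1.1
  have hsurplus : ∀ c' ∈ S,
      -entrySurplus k ρ (ρ * (sol c').1 - (sol c').2) (sol c').1 = -c'.2 := fun c' hc' => by
    have h := FEres_gkr_eq_entrySurplus_sub hk hρ c'.2 (sol c').2 (sol c').1
    rw [hmargin c' hc', (hsol c' hc').1.2] at h
    linarith
  have hx : Tendsto (fun c' => ρ * (sol c').1 - (sol c').2) (𝓝[S] c)
      (𝓝 (ρ * (sol c).1 - (sol c).2)) :=
    tendsto_of_strictMono_of_eventually_eq (F := fun _ : Unit => gkr k ρ) (y₀ := ())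
      (fun _ => gkr_strictMono hk (pow_lt_one₀ hρ.1.le hρ.2 two_ne_zero))
      (fun _ => continuousAt_const) tendsto_const_nhds
      (hmargin c hc ▸ continuous_fst.continuousWithinAt) (eventually_nhdsWithin_of_forall hmargin)
  have ht : Tendsto (fun c' => (sol c').1) (𝓝[S] c) (𝓝 (sol c).1) :=
    tendsto_of_strictMono_of_eventually_eq (F := fun x t => -entrySurplus k ρ x t)
      (fun x => (entrySurplus_strictAnti hk hρ x).neg)
      (fun t => (continuous_entrySurplus hk.le t).neg.continuousAt) hx
      (hsurplus c hc ▸ continuous_snd.neg.continuousWithinAt)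
      (eventually_nhdsWithin_of_forall hsurplus)
  have hp : Tendsto (fun c' => (sol c').2) (𝓝[S] c) (𝓝 (sol c).2) := by
    simpa only [sub_sub_cancel] using (ht.const_mul ρ).sub hx
  exact ht.prodMk_nhds hp
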